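/- arXiv:2208.08588 — 2 statements merged into one kernel-verified Lean document; each statement's English description precedes it below -/
import Mathlib

section
/- Let $I=(t^{v_1},\dots,t^{v_q})$ be a monomial ideal of $S=K[t_1,\dots,t_s]$ and let $A$ be the $s\times q$ matrix with columns $v_1,\dots,v_q$. Then $I$ is normal if and only if for each pair of vectors $\alpha\in\mathbb{N}^s$ and $\lambda\in\mathbb{Q}_+^q$ with $A\lambda\le\alpha$, there exists $m\in\mathbb{N}^q$ satisfying $Am\le\alpha$ and $|\lambda| = |m| + \epsilon$ with $0\le\epsilon<1$. -/
open MvPolynomial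

/-- The monomial `t^a` in `K[t_1,…,t_s]`. -/
noncomputable def mono (K : Type*) [Field K] {s : ℕ} (a : Fin s → ℕ) :
    MvPolynomial (Fin s) K :=
  MvPolynomial.monomial (Finsupp.equivFunOnFinite.symm a) 1

/-- The monomial ideal generated by the monomials `t^{v i}`. -/
noncomputable def monIdeal (K : Type*) [Field K] {s q : ℕ} (v : Fin q → Fin s → ℕ) :
    Ideal (MvPolynomial (Fin s) K) :=
  Ideal.span (Set.range fun i => mono K (v i))

/-- The integral closure of a monomial ideal `J`: the ideal generated by the
monomials `t^a` such that `(t^a)^p ∈ J^p` for some `p ≥ 1`. -/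
noncomputable def intCl {K : Type*} [Field K] {s : ℕ}
    (J : Ideal (MvPolynomial (Fin s) K)) : Ideal (MvPolynomial (Fin s) K) :=
  Ideal.span {m | (∃ a : Fin s → ℕ, m = mono K a) ∧ ∃ p : ℕ, 1 ≤ p ∧ m ^ p ∈ J ^ p}

/-- A monomial ideal is normal if `I^n` is integrally closed for all `n ≥ 1`. -/
def IsNormalIdeal {K : Type*} [Field K] {s : ℕ}
    (I : Ideal (MvPolynomial (Fin s) K)) : Prop :=
  ∀ n : ℕ, 1 ≤ n → intCl (I ^ n) = I ^ n

section aux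
variable (K : Type*) [Field K] {s q : ℕ}

lemma equivsymm_add (a b : Fin s → ℕ) :
    Finsupp.equivFunOnFinite.symm (a + b) =
      Finsupp.equivFunOnFinite.symm a + Finsupp.equivFunOnFinite.symm b := by
  ext k; simp

lemma mono_mul (a b : Fin s → ℕ) : mono K a * mono K b = mono K (a + b) := by
  simp only [mono, monomial_mul, one_mul, equivsymm_add]

lemma mono_pow (a : Fin s → ℕ) (p : ℕ) : mono K a ^ p = mono K (fun k => p * a k) := by
  induction p with
  | zero =>
    simp only [pow_zero]
    have h : (fun k => 0 * a k) = (0 : Fin s → ℕ) := by ext k; simp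
    rw [h]
    have h0 : Finsupp.equivFunOnFinite.symm (0 : Fin s → ℕ) = 0 := by ext k; simp
    rw [mono, h0, monomial_zero', C_1]
  | succ p ih =>
    rw [pow_succ, ih, mono_mul]
    congr 1
    ext k
    simp [Nat.succ_mul]

lemma mono_coe (d : Fin s →₀ ℕ) : mono K (⇑d) = monomial d 1 := by
  have h : Finsupp.equivFunOnFinite.symm ⇑d = d := by ext k; simp
  rw [mono, h]

variable (v : Fin q → Fin s → ℕ)

/-- Exponents appearing in the natural monomial generating set of `I^n`. -/
def expSet (n : ℕ) : Set (Fin s →₀ ℕ) :=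
  {d | ∃ m : Fin q → ℕ, (∑ i, m i) = n ∧ ∀ k, d k = ∑ i, m i * v i k}

lemma sum_add_single (m : Fin q → ℕ) (i : Fin q) :
    (∑ j, (m j + (Pi.single i 1 : Fin q → ℕ) j)) = (∑ j, m j) + 1 := by
  rw [Finset.sum_add_distrib, Finset.sum_pi_single']
  simp

lemma sum_add_single_mul (m : Fin q → ℕ) (i : Fin q) (k : Fin s) :
    (∑ j, (m j + (Pi.single i 1 : Fin q → ℕ) j) * v j k) = (∑ j, m j * v j k) + v i k := by
  simp only [add_mul, Finset.sum_add_distrib]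
  congr 1
  rw [Finset.sum_eq_single i]
  · simp
  · intro b _ hb; simp [Pi.single_eq_of_ne hb]
  · simp

lemma pow_eq_span (n : ℕ) :
    monIdeal K v ^ n = Ideal.span ((fun d => monomial d (1 : K)) '' expSet v n) := by
  induction n with
  | zero =>
    have h : expSet v 0 = {0} := by
      ext d
      constructor
      · rintro ⟨m, hm, hd⟩
        have hz : ∀ i ∈ Finset.univ, m i = 0 := by
          intro i _
          exact (Finset.sum_eq_zero_iff).mp hm i (Finset.mem_univ i)
        ext k
        simp only [hd]
        rw [Finset.sum_eq_zero]
        · rfl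
        · intro i hi; rw [hz i hi]; ring
      · rintro rfl
        exact ⟨0, by simp, by simp⟩
    rw [pow_zero, h, Set.image_singleton, monomial_zero', C_1, Ideal.span_singleton_one,
      Ideal.one_eq_top]
  | succ n ih =>
    have hI : monIdeal K v =
        Ideal.span ((fun d => monomial d (1 : K)) ''
          (Set.range fun i => Finsupp.equivFunOnFinite.symm (v i))) := by
      rw [monIdeal, ← Set.range_comp]
      rfl
    rw [pow_succ, ih, hI, Ideal.span_mul_span']
    congr 1
    ext x
    rw [Set.mem_mul]
    constructor
    · rintro ⟨_, ⟨d, ⟨m, hm, hd⟩, rfl⟩, _, ⟨_, ⟨i, rfl⟩, rfl⟩, rfl⟩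
      refine ⟨d + Finsupp.equivFunOnFinite.symm (v i),
        ⟨fun j => m j + (Pi.single i 1 : Fin q → ℕ) j, ?_, ?_⟩, ?_⟩
      · rw [sum_add_single, hm]
      · intro k
        rw [sum_add_single_mul]
        simp [hd k]
      · rw [monomial_mul, one_mul]
    · rintro ⟨d, ⟨m', hm', hd⟩, rfl⟩
      have hpos : (∑ i, m' i) ≠ 0 := by omega
      obtain ⟨i, _, hi⟩ := Finset.exists_ne_zero_of_sum_ne_zero hpos
      set m : Fin q → ℕ := fun j => m' j - (Pi.single i 1 : Fin q → ℕ) j with hmdef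
      have hkey : ∀ j, m' j = m j + (Pi.single i 1 : Fin q → ℕ) j := by
        intro j
        by_cases hj : j = i
        · subst hj; simp [hmdef]; omega
        · simp [hmdef, Pi.single_eq_of_ne hj]
      have hsum : (∑ j, m j) = n := by
        have h1 : (∑ j, m' j) = (∑ j, m j) + 1 := by
          calc (∑ j, m' j) = ∑ j, (m j + (Pi.single i 1 : Fin q → ℕ) j) :=
                Finset.sum_congr rfl fun j _ => hkey j
            _ = (∑ j, m j) + 1 := sum_add_single m i
        omega
      have hsplit : d = (Finsupp.equivFunOnFinite.symm fun k => ∑ j, m j * v j k)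
          + Finsupp.equivFunOnFinite.symm (v i) := by
        rw [← equivsymm_add]
        ext k
        rw [hd k]
        calc (∑ j, m' j * v j k) = ∑ j, (m j + (Pi.single i 1 : Fin q → ℕ) j) * v j k :=
              Finset.sum_congr rfl fun j _ => by rw [← hkey j]
          _ = (∑ j, m j * v j k) + v i k := sum_add_single_mul v m i k
          _ = _ := rfl
      refine ⟨monomial (Finsupp.equivFunOnFinite.symm fun k => ∑ j, m j * v j k) 1,
        ⟨_, ⟨m, hsum, fun k => rfl⟩, rfl⟩,
        monomial (Finsupp.equivFunOnFinite.symm (v i)) 1, ⟨_, ⟨i, rfl⟩, rfl⟩, ?_⟩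
      rw [monomial_mul, one_mul, ← hsplit]

lemma mem_pow_iff (α : Fin s → ℕ) (n : ℕ) :
    mono K α ∈ monIdeal K v ^ n ↔
      ∃ m : Fin q → ℕ, (∑ i, m i) = n ∧ ∀ k, (∑ i, m i * v i k) ≤ α k := by
  classical
  rw [pow_eq_span, mem_ideal_span_monomial_image]
  have hsupp : (mono K α).support = {Finsupp.equivFunOnFinite.symm α} := by
    rw [mono, support_monomial, if_neg one_ne_zero]
  rw [hsupp]
  simp only [Finset.mem_singleton, forall_eq]
  constructor
  · rintro ⟨d, ⟨m, hm, hd⟩, hle⟩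
    exact ⟨m, hm, fun k => by simpa [hd k] using hle k⟩
  · rintro ⟨m, hm, hle⟩
    refine ⟨Finsupp.equivFunOnFinite.symm fun k => ∑ i, m i * v i k,
      ⟨m, hm, fun k => by simp⟩, fun k => by simpa using hle k⟩

lemma exists_nat_mul (r : ℚ) (hr : 0 ≤ r) (p : ℕ) (hd : r.den ∣ p) :
    ∃ c : ℕ, (c : ℚ) = p * r := by
  obtain ⟨t, rfl⟩ := hd
  refine ⟨t * r.num.toNat, ?_⟩
  have h1 : (r.den : ℚ) * r = r.num := by
    have hden : ((r.den : ℚ)) ≠ 0 := by exact_mod_cast r.den_nz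
    nth_rewrite 2 [← Rat.num_div_den r]
    rw [mul_comm, div_mul_cancel₀ _ hden]
  have h2 : (r.num.toNat : ℤ) = r.num := Int.toNat_of_nonneg (Rat.num_nonneg.mpr hr)
  have h3 : ((r.num.toNat : ℕ) : ℚ) = (r.num : ℚ) := by exact_mod_cast congrArg Int.cast h2
  push_cast
  rw [h3, mul_comm (r.den : ℚ) (t : ℚ), mul_assoc, h1]

end aux

theorem normal_iff_rounding_criterion
    (K : Type*) [Field K] {s q : ℕ} (v : Fin q → Fin s → ℕ) :
    IsNormalIdeal (monIdeal K v) ↔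
      ∀ (α : Fin s → ℕ) (lam : Fin q → ℚ),
        (∀ i, 0 ≤ lam i) →
        (∀ k, (∑ i, lam i * (v i k : ℚ)) ≤ (α k : ℚ)) →
        ∃ m : Fin q → ℕ,
          (∀ k, (∑ i, (m i : ℚ) * (v i k : ℚ)) ≤ (α k : ℚ)) ∧
          ∃ ε : ℚ, 0 ≤ ε ∧ ε < 1 ∧ (∑ i, lam i) = (∑ i, (m i : ℚ)) + ε := by
  constructor
  · -- normal → criterion
    intro hnorm α lam hlam hA
    set L := ∑ i, lam i with hLdef
    have hL0 : 0 ≤ L := Finset.sum_nonneg fun i _ => hlam i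
    rcases Nat.eq_zero_or_pos ⌊L⌋₊ with hn0 | hn
    · refine ⟨0, fun k => by simp, L, hL0, ?_, by simp⟩
      have := (Nat.floor_eq_zero).mp hn0
      exact this
    · set n := ⌊L⌋₊ with hndef
      have hnL : (n : ℚ) ≤ L := Nat.floor_le hL0
      have hn1 : (1 : ℚ) ≤ (n : ℚ) := by exact_mod_cast hn
      have hLpos : 0 < L := lt_of_lt_of_le (by linarith) hnL
      set lam' : Fin q → ℚ := fun i => (n / L) * lam i with hlam'def
      have hratio0 : 0 ≤ (n : ℚ) / L := by positivity
      have hratio1 : (n : ℚ) / L ≤ 1 := by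
        rw [div_le_one hLpos]; exact hnL
      have hlam'0 : ∀ i, 0 ≤ lam' i := fun i => mul_nonneg hratio0 (hlam i)
      set p := ∏ i, (lam' i).den with hpdef
      have hp1 : 1 ≤ p := Finset.one_le_prod' fun i _ => (lam' i).pos
      have hdvd : ∀ i, (lam' i).den ∣ p := fun i => Finset.dvd_prod_of_mem _ (Finset.mem_univ i)
      choose m' hm' using fun i => exists_nat_mul (lam' i) (hlam'0 i) p (hdvd i)
      have hpq : (0 : ℚ) < p := by exact_mod_cast hp1
      have hsumlam' : ∑ i, lam' i = n := by
        rw [hlam'def, ← Finset.mul_sum, ← hLdef, div_mul_cancel₀]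
        exact ne_of_gt hLpos
      have hm'sumQ : (∑ i, (m' i : ℚ)) = (n : ℚ) * p := by
        calc (∑ i, (m' i : ℚ)) = ∑ i, (p : ℚ) * lam' i :=
              Finset.sum_congr rfl fun i _ => hm' i
          _ = (p : ℚ) * ∑ i, lam' i := by rw [Finset.mul_sum]
          _ = (n : ℚ) * p := by rw [hsumlam']; ring
      have hm'sum : (∑ i, m' i) = n * p := by
        have : ((∑ i, m' i : ℕ) : ℚ) = ((n * p : ℕ) : ℚ) := by
          push_cast
          rw [hm'sumQ]
        exact_mod_cast this
      have hm'le : ∀ k, (∑ i, m' i * v i k) ≤ p * α k := by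
        intro k
        have hX0 : 0 ≤ ∑ i, lam i * (v i k : ℚ) :=
          Finset.sum_nonneg fun i _ => mul_nonneg (hlam i) (Nat.cast_nonneg _)
        have hQ : (∑ i, (m' i : ℚ) * (v i k : ℚ)) ≤ (p : ℚ) * α k := by
          calc (∑ i, (m' i : ℚ) * (v i k : ℚ))
              = ∑ i, (p : ℚ) * (lam' i * (v i k : ℚ)) :=
                Finset.sum_congr rfl fun i _ => by rw [hm' i]; ring
            _ = (p : ℚ) * ((n / L) * ∑ i, lam i * (v i k : ℚ)) := by
                rw [← Finset.mul_sum, Finset.mul_sum (a := (n : ℚ) / L)]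
                congr 1
                exact Finset.sum_congr rfl fun i _ => by rw [hlam'def]; ring
            _ ≤ (p : ℚ) * (1 * ∑ i, lam i * (v i k : ℚ)) := by
                apply mul_le_mul_of_nonneg_left _ (le_of_lt hpq)
                exact mul_le_mul_of_nonneg_right hratio1 hX0
            _ = (p : ℚ) * ∑ i, lam i * (v i k : ℚ) := by ring
            _ ≤ (p : ℚ) * α k := mul_le_mul_of_nonneg_left (hA k) (le_of_lt hpq)
        exact_mod_cast hQ
      have hmem : mono K α ∈ intCl (monIdeal K v ^ n) := by
        apply Ideal.subset_span
        refine ⟨⟨α, rfl⟩, p, hp1, ?_⟩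
        rw [mono_pow, ← pow_mul, mem_pow_iff]
        exact ⟨m', hm'sum, fun k => hm'le k⟩
      rw [hnorm n hn, mem_pow_iff] at hmem
      obtain ⟨m, hmsum, hmle⟩ := hmem
      have hmsumQ : (∑ i, (m i : ℚ)) = (n : ℚ) := by
        have : ((∑ i, m i : ℕ) : ℚ) = (n : ℚ) := by exact_mod_cast hmsum
        push_cast at this
        exact this
      refine ⟨m, fun k => ?_, L - n, by linarith, ?_, ?_⟩
      · have := hmle k
        exact_mod_cast this
      · have h := Nat.lt_floor_add_one L
        rw [← hndef] at h
        linarith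
      · rw [hmsumQ]; ring
  · -- criterion → normal
    intro hcrit n hn
    apply le_antisymm
    · rw [intCl]
      apply Ideal.span_le.mpr
      rintro x ⟨⟨a, rfl⟩, p, hp, hpow⟩
      rw [mono_pow, ← pow_mul, mem_pow_iff] at hpow
      obtain ⟨m', hm'sum, hm'le⟩ := hpow
      have hp0 : (0 : ℚ) < p := by exact_mod_cast hp
      set lam : Fin q → ℚ := fun i => (m' i : ℚ) / p with hlamdef
      have hlam0 : ∀ i, 0 ≤ lam i := fun i => by positivity
      have hAcond : ∀ k, (∑ i, lam i * (v i k : ℚ)) ≤ (a k : ℚ) := by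
        intro k
        have h1 : (∑ i, (m' i : ℚ) * (v i k : ℚ)) ≤ (p : ℚ) * a k := by
          exact_mod_cast hm'le k
        have h2 : (∑ i, lam i * (v i k : ℚ)) = (∑ i, (m' i : ℚ) * (v i k : ℚ)) / p := by
          rw [Finset.sum_div]
          exact Finset.sum_congr rfl fun i _ => by rw [hlamdef]; ring
        rw [h2, div_le_iff₀ hp0, mul_comm]
        exact h1
      obtain ⟨m, hmle, ε, hε0, hε1, hsum⟩ := hcrit a lam hlam0 hAcond
      have hlamsum : (∑ i, lam i) = (n : ℚ) := by
        have h3 : (∑ i, (m' i : ℚ)) = ((n * p : ℕ) : ℚ) := by exact_mod_cast hm'sum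
        push_cast at h3
        calc (∑ i, lam i) = (∑ i, (m' i : ℚ)) / p := by
              rw [Finset.sum_div]
          _ = (n : ℚ) := by rw [h3]; field_simp
      have hms : (∑ i, m i) = n := by
        rw [hlamsum] at hsum
        have hle1 : ((∑ i, m i : ℕ) : ℚ) ≤ (n : ℚ) := by push_cast; linarith
        have hle2 : (n : ℚ) < ((∑ i, m i : ℕ) : ℚ) + 1 := by push_cast; linarith
        have h1 : (∑ i, m i) ≤ n := by exact_mod_cast hle1
        have h2 : (n : ℚ) < ((∑ i, m i) + 1 : ℕ) := by push_cast; linarith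
        have h2' : n < (∑ i, m i) + 1 := by exact_mod_cast h2
        omega
      rw [SetLike.mem_coe, mem_pow_iff]
      refine ⟨m, hms, fun k => ?_⟩
      have := hmle k
      exact_mod_cast this
    · conv_lhs => rw [pow_eq_span]
      apply Ideal.span_le.mpr
      rintro x ⟨d, hd, rfl⟩
      apply Ideal.subset_span
      refine ⟨⟨⇑d, (mono_coe K d).symm⟩, 1, le_refl 1, ?_⟩
      rw [pow_one, pow_one, pow_eq_span]
      exact Ideal.subset_span ⟨d, hd, rfl⟩
end

section
/- Let $I=(t^{v_1},\dots,t^{v_q})$ be an ideal of $S=K[t_1,\dots,t_s]$ generated by monomials of degree $2$, and let $\mathcal{B} = \{e_{s+1}\}\cup\{e_i+e_{s+1}\}_{i=1}^s\cup\{(v_i,1)\}_{i=1}^q \subset \mathbb{Z}^{s+1}$. Then $I$ is a normal ideal if and only if $\mathcal{B}$ is a Hilbert basis, i.e., $\mathbb{R}_+\mathcal{B}\cap\mathbb{Z}^{s+1}=\mathbb{N}\mathcal{B}$. -/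
/-!
Write a point of `ℤ^{s+1}` as `(a, z)`. Since every `|v_j| = 2`, a combination of `ℬ` with
coefficients `λ` on `e_{s+1}`, `μ_i` on `e_i + e_{s+1}` and `m_j` on `(v_j, 1)` has
`a = μ + ∑ m_j v_j` and `z = λ + |a| - ∑ m_j`. Hence `(a, z) ∈ ℕℬ` iff `t^a` is divisible by a
product of at least `|a| - z` generators, i.e. `t^a ∈ I^{|a| - z}`. Normality says that
`t^{pa} ∈ I^{pn}` with `p ≥ 1` forces `t^a ∈ I^n`, and an integer point lies in `ℝ₊ℬ` iff some
positive multiple of it lies in `ℕℬ`; so the two conditions translate into each other.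
-/

open MvPolynomial

/-- The vectors of the set
`ℬ = {e_{s+1}} ∪ {e_i + e_{s+1}}_{i=1}^s ∪ {(v_i,1)}_{i=1}^q` in `ℤ^{s+1}`. -/
def bGens {s q : ℕ} (v : Fin q → Fin s → ℕ) : (Unit ⊕ Fin s ⊕ Fin q) → Fin (s + 1) → ℤ :=
  Sum.elim
    (fun _ k => if (k : ℕ) = s then 1 else 0)
    (Sum.elim
      (fun i k => (if (k : ℕ) = (i : ℕ) then 1 else 0) + (if (k : ℕ) = s then 1 else 0))
      (fun j k => if h : (k : ℕ) < s then (v j ⟨k, h⟩ : ℤ) else 1))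

open Filter Topology
open scoped Pointwise

/-- `t^b ∈ I^c` read on exponents: `t^b` is divisible by a product of at least `c` generators. -/
def ExpMemPow {s q : ℕ} (v : Fin q → Fin s → ℕ) (b : Fin s → ℕ) (c : ℕ) : Prop :=
  ∃ m : Fin q → ℕ, c ≤ ∑ j, m j ∧ ∀ k, ∑ j, m j * v j k ≤ b k

section MonomialIdeal

variable {K : Type*} [Field K] {s q : ℕ}

theorem mono_add (a b : Fin s → ℕ) : mono K (a + b) = mono K a * mono K b := by
  rw [mono, mono, mono, monomial_mul, one_mul]
  congr
  ext
  simp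

theorem mono_nsmul (p : ℕ) (a : Fin s → ℕ) : mono K (p • a) = mono K a ^ p := by
  rw [mono, mono, monomial_pow, one_pow]
  congr
  ext
  simp

theorem mono_zero : mono K (0 : Fin s → ℕ) = 1 := by
  rw [mono, ← C_1, ← monomial_zero']
  congr
  ext
  simp

theorem mono_sum {ι : Type*} (t : Finset ι) (f : ι → Fin s → ℕ) :
    mono K (∑ j ∈ t, f j) = ∏ j ∈ t, mono K (f j) := by
  classical
  induction t using Finset.induction_on with
  | empty => simp [mono_zero]
  | insert j t hj ih => rw [Finset.sum_insert hj, Finset.prod_insert hj, mono_add, ih]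

variable (K) (v : Fin q → Fin s → ℕ)

theorem monIdeal_pow (c : ℕ) :
    monIdeal K v ^ c = Ideal.span ((Set.range fun j => mono K (v j)) ^ c) := by
  rw [monIdeal, ← Ideal.submodule_span_eq, Submodule.span_pow, Ideal.submodule_span_eq]

theorem mono_mem_monIdeal (j : Fin q) : mono K (v j) ∈ monIdeal K v :=
  Ideal.subset_span (Set.mem_range_self j)

theorem range_mono_pow_subset (c : ℕ) :
    (Set.range fun j => mono K (v j)) ^ c ⊆
      mono K '' {e | ∃ m : Fin q → ℕ, ∑ j, m j = c ∧ e = ∑ j, m j • v j} := by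
  induction c with
  | zero =>
    rintro x rfl
    exact ⟨0, ⟨0, by simp, by simp⟩, mono_zero⟩
  | succ c ih =>
    rw [pow_succ]
    rintro _ ⟨_, hx, _, ⟨j, rfl⟩, rfl⟩
    obtain ⟨_, ⟨m, rfl, rfl⟩, rfl⟩ := ih hx
    refine ⟨_, ⟨m + Pi.single j 1, by simp [Finset.sum_add_distrib], rfl⟩, ?_⟩
    show _ = mono K _ * mono K _
    rw [← mono_add]
    simp only [Pi.add_apply, add_smul, Finset.sum_add_distrib, Pi.single_apply, ite_smul, one_smul,
      zero_smul, Finset.sum_ite_eq', Finset.mem_univ, if_true]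

variable {K} {v}

theorem mono_mem_monIdeal_pow_iff (b : Fin s → ℕ) (c : ℕ) :
    mono K b ∈ monIdeal K v ^ c ↔ ExpMemPow v b c := by
  classical
  constructor
  · intro h
    rw [monIdeal_pow] at h
    replace h := Ideal.span_mono (range_mono_pow_subset K v c) h
    rw [show mono K '' _ = _ from
        (Set.image_image (fun d => monomial d (1 : K)) Finsupp.equivFunOnFinite.symm _).symm,
      mono, mem_ideal_span_monomial_image, support_monomial, if_neg one_ne_zero] at h
    obtain ⟨_, ⟨_, ⟨m, hm, rfl⟩, rfl⟩, hle⟩ := h _ (Finset.mem_singleton_self _)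
    exact ⟨m, hm.ge, fun k => by simpa using hle k⟩
  · rintro ⟨m, hc, hle⟩
    have hb : b = (b - ∑ j, m j • v j) + ∑ j, m j • v j :=
      (tsub_add_cancel_of_le fun k => by simpa using hle k).symm
    rw [hb, mono_add, mono_sum]
    refine Ideal.mul_mem_left _ _ (Ideal.pow_le_pow_right hc ?_)
    rw [← Finset.prod_pow_eq_pow_sum]
    refine Ideal.prod_mem_prod fun j _ => ?_
    rw [mono_nsmul]
    exact Ideal.pow_mem_pow (mono_mem_monIdeal K v j) _

theorem isNormalIdeal_monIdeal_iff :
    IsNormalIdeal (monIdeal K v) ↔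
      ∀ (a : Fin s → ℕ) (n p : ℕ), 0 < p → ExpMemPow v (p • a) (p * n) → ExpMemPow v a n := by
  constructor
  · intro hI a n p hp hpa
    rcases n.eq_zero_or_pos with rfl | hn
    · exact ⟨0, by simp, by simp⟩
    rw [← mono_mem_monIdeal_pow_iff (K := K), ← hI n hn]
    refine Ideal.subset_span ⟨⟨a, rfl⟩, p, hp, ?_⟩
    rwa [← mono_nsmul, ← pow_mul, mul_comm, mono_mem_monIdeal_pow_iff]
  · intro hA n hn
    apply le_antisymm
    · rw [intCl, Ideal.span_le]
      rintro _ ⟨⟨a, rfl⟩, p, hp, hpow⟩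
      rw [← mono_nsmul, ← pow_mul, mul_comm, mono_mem_monIdeal_pow_iff] at hpow
      exact (mono_mem_monIdeal_pow_iff a n).2 (hA a n p hp hpow)
    · rw [monIdeal_pow, Ideal.span_le]
      intro x hx
      obtain ⟨e, -, rfl⟩ := range_mono_pow_subset K v n hx
      refine Ideal.subset_span ⟨⟨e, rfl⟩, 1, le_rfl, ?_⟩
      rw [pow_one, pow_one]
      exact Ideal.subset_span hx

end MonomialIdeal

theorem exists_linearMap_rat_pos {ι : Type*} [Finite ι] (c : ι → ℝ) :
    ∃ φ : ℝ →ₗ[ℚ] ℚ, φ 1 = 1 ∧ ∀ j, 0 < c j → 0 < φ (c j) := by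
  -- Sending a `ℚ`-basis of `W = span_ℚ {1, c j}` to rationals close to the basis vectors gives
  -- `ℚ`-linear maps `W → ℚ` arbitrarily close to the inclusion; positivity is an open condition.
  set W := Submodule.span ℚ (insert 1 (Set.range c))
  have : FiniteDimensional ℚ W := .span_of_finite ℚ ((Set.finite_range c).insert 1)
  let b := Module.finBasis ℚ W
  let F : W → (Fin (Module.finrank ℚ W) → ℝ) → ℝ := fun w ρ => ∑ l, (b.repr w l : ℝ) * ρ l
  have hF : ∀ w, F w (fun l => (b l : ℝ)) = w := by
    intro w
    conv_rhs => rw [← b.sum_repr w]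
    simp only [F, Submodule.coe_sum, Submodule.coe_smul, Rat.smul_def]
  have hpos : ∀ w : W, 0 < (w : ℝ) → ∀ᶠ ρ in 𝓝 (fun l => (b l : ℝ)), 0 < F w ρ := by
    intro w hw
    refine Tendsto.eventually_const_lt (hF w ▸ hw) ?_
    exact (continuous_finsetSum _ fun l _ => continuous_const.mul (continuous_apply l)).tendsto _
  have hone : (1 : ℝ) ∈ W := Submodule.subset_span (Set.mem_insert _ _)
  have hc : ∀ j, c j ∈ W := fun j => Submodule.subset_span (Set.mem_insert_of_mem _ ⟨j, rfl⟩)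
  have hev : ∀ᶠ ρ in 𝓝 (fun l => (b l : ℝ)),
      0 < F ⟨1, hone⟩ ρ ∧ ∀ j, 0 < c j → 0 < F ⟨c j, hc j⟩ ρ := by
    refine (hpos _ one_pos).and (eventually_all.2 fun j => ?_)
    by_cases hj : 0 < c j
    · exact (hpos _ hj).mono fun ρ h _ => h
    · exact Eventually.of_forall fun ρ h => absurd h hj
  obtain ⟨ρ, hρ1, hρc⟩ := (DenseRange.piMap fun _ => Rat.denseRange_cast).mem_nhds hev
  obtain ⟨g, hg⟩ := LinearMap.exists_extend (b.constr ℚ ρ)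
  have hgF : ∀ w : W, (g w : ℝ) = F w (fun l => ρ l) := by
    intro w
    have := LinearMap.congr_fun hg w
    simp only [LinearMap.comp_apply, Submodule.subtype_apply,
      Module.Basis.constr_apply_fintype] at this
    simp [F, this, mul_comm]
  have hg1 : 0 < g 1 := by exact_mod_cast (hgF ⟨1, hone⟩).trans_gt hρ1
  refine ⟨(g 1)⁻¹ • g, by simp [hg1.ne'], fun j hj => ?_⟩
  have : 0 < g (c j) := by exact_mod_cast (hgF ⟨c j, hc j⟩).trans_gt (hρc j hj)
  simp only [LinearMap.smul_apply, smul_eq_mul]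
  positivity

theorem exists_pos_nat_mul_eq_natCast {ι : Type*} [Fintype ι] (c : ι → ℚ) (hc : ∀ j, 0 ≤ c j) :
    ∃ p : ℕ, 0 < p ∧ ∃ m : ι → ℕ, ∀ j, (m j : ℚ) = p * c j := by
  refine ⟨∏ j, (c j).den, Finset.prod_pos fun j _ => (c j).den_pos,
    fun j => (∏ i, (c i).den) / (c j).den * (c j).num.toNat, fun j => ?_⟩
  have hdvd : (c j).den ∣ ∏ i, (c i).den := Finset.dvd_prod_of_mem _ (Finset.mem_univ j)
  have hnum : ((c j).num.toNat : ℚ) = (c j).num := by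
    exact_mod_cast Int.toNat_of_nonneg (Rat.num_nonneg.2 (hc j))
  rw [Nat.cast_mul, Nat.cast_div hdvd (by exact_mod_cast (c j).den_ne_zero), hnum,
    ← Rat.mul_den_eq_num]
  field_simp

section Cone

variable {ι κ : Type*} [Fintype ι] (b : ι → κ → ℤ)

def InRealCone (x : κ → ℤ) : Prop :=
  ∃ c : ι → ℝ, (∀ j, 0 ≤ c j) ∧ ∀ k, (x k : ℝ) = ∑ j, c j * (b j k : ℝ)

def InNatSemigroup (x : κ → ℤ) : Prop :=
  ∃ c : ι → ℕ, ∀ k, x k = ∑ j, (c j : ℤ) * b j k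

variable {b} {x : κ → ℤ}

theorem InNatSemigroup.inRealCone (hx : InNatSemigroup b x) : InRealCone b x := by
  obtain ⟨c, hc⟩ := hx
  exact ⟨fun j => c j, fun j => Nat.cast_nonneg _, fun k => by simp [hc k]⟩

theorem InRealCone.of_nsmul {p : ℕ} (hp : 0 < p) (hx : InRealCone b (p • x)) :
    InRealCone b x := by
  obtain ⟨c, hc0, hc⟩ := hx
  refine ⟨fun j => c j / p, fun j => div_nonneg (hc0 j) p.cast_nonneg, fun k => ?_⟩
  have h := hc k
  simp only [Pi.smul_apply, nsmul_eq_mul, Int.cast_mul, Int.cast_natCast] at h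
  simp_rw [div_mul_eq_mul_div, ← Finset.sum_div, ← h]
  field_simp

theorem InRealCone.nonneg (hb : ∀ j k, 0 ≤ b j k) (hx : InRealCone b x) (k : κ) : 0 ≤ x k := by
  obtain ⟨c, hc0, hc⟩ := hx
  have : (0 : ℝ) ≤ x k :=
    hc k ▸ Finset.sum_nonneg fun j _ => mul_nonneg (hc0 j) (by exact_mod_cast hb j k)
  exact_mod_cast this

theorem InRealCone.exists_rat (hx : InRealCone b x) :
    ∃ c : ι → ℚ, (∀ j, 0 ≤ c j) ∧ ∀ k, (x k : ℚ) = ∑ j, c j * (b j k : ℚ) := by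
  obtain ⟨c, hc0, hc⟩ := hx
  obtain ⟨φ, hφ1, hφpos⟩ := exists_linearMap_rat_pos c
  refine ⟨fun j => φ (c j), fun j => ?_, fun k => ?_⟩
  · rcases (hc0 j).eq_or_lt with h | h
    · simp [← h]
    · exact (hφpos j h).le
  · have hφ : ∀ (q : ℚ) (r : ℝ), φ (q * r) = q * φ r := fun q r => by
      rw [← Rat.smul_def, map_smul, smul_eq_mul]
    have := congrArg φ (hc k)
    rw [← mul_one (x k : ℝ), show ((x k : ℤ) : ℝ) = ((x k : ℚ) : ℝ) by simp, hφ, hφ1, mul_one,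
      map_sum] at this
    rw [this]
    refine Finset.sum_congr rfl fun j _ => ?_
    rw [mul_comm, show ((b j k : ℤ) : ℝ) = ((b j k : ℚ) : ℝ) by simp, hφ, mul_comm]

theorem InRealCone.exists_nsmul_inNatSemigroup (hx : InRealCone b x) :
    ∃ p : ℕ, 0 < p ∧ InNatSemigroup b (p • x) := by
  obtain ⟨c, hc0, hc⟩ := hx.exists_rat
  obtain ⟨p, hp, m, hm⟩ := exists_pos_nat_mul_eq_natCast c hc0
  refine ⟨p, hp, m, fun k => ?_⟩
  have : ((p • x) k : ℚ) = ∑ j, (m j : ℚ) * b j k := by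
    simp [hm, hc k, Finset.mul_sum, mul_assoc]
  exact_mod_cast this

end Cone

theorem Int.toNat_natCast_mul (n : ℕ) (w : ℤ) : ((n : ℤ) * w).toNat = n * w.toNat := by
  rcases le_total 0 w with h | h
  · rw [Int.toNat_mul (Int.natCast_nonneg n) h, Int.toNat_natCast]
  · rw [Int.toNat_eq_zero.2 h, mul_zero, Int.toNat_eq_zero]
    exact mul_nonpos_of_nonneg_of_nonpos (Int.natCast_nonneg n) h

theorem Fin.exists_eq_snoc_natCast {n : ℕ} (x : Fin (n + 1) → ℤ)
    (hx : ∀ i : Fin n, 0 ≤ x i.castSucc) :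
    ∃ (a : Fin n → ℕ) (z : ℤ), x = Fin.snoc (fun i => (a i : ℤ)) z := by
  refine ⟨fun i => (x i.castSucc).toNat, x (Fin.last n), funext fun k => ?_⟩
  induction k using Fin.lastCases <;> simp [Int.toNat_of_nonneg (hx _)]

section BGens

variable {s q : ℕ} (v : Fin q → Fin s → ℕ)

theorem bGens_nonneg (j : Unit ⊕ Fin s ⊕ Fin q) (k : Fin (s + 1)) : 0 ≤ bGens v j k := by
  rcases j with _ | i | j <;> simp only [bGens, Sum.elim_inl, Sum.elim_inr] <;> split_ifs <;>
    positivity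

theorem sum_mul_bGens_castSucc (c : Unit ⊕ Fin s ⊕ Fin q → ℤ) (i : Fin s) :
    ∑ j, c j * bGens v j i.castSucc = c (.inr (.inl i)) + ∑ j, c (.inr (.inr j)) * v j i := by
  simp [Fintype.sum_sum_type, bGens, i.isLt.ne, Fin.val_inj, mul_ite]

theorem sum_mul_bGens_last (c : Unit ⊕ Fin s ⊕ Fin q → ℤ) :
    ∑ j, c j * bGens v j (Fin.last s) =
      c (.inl ()) + ∑ i, c (.inr (.inl i)) + ∑ j, c (.inr (.inr j)) := by
  simp [Fintype.sum_sum_type, bGens, add_assoc, fun i : Fin s => i.isLt.ne']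

variable {v}

theorem sum_sum_mul_eq_two_mul (hdeg : ∀ j, ∑ k, v j k = 2) (m : Fin q → ℕ) :
    ∑ i, ∑ j, m j * v j i = 2 * ∑ j, m j := by
  rw [Finset.sum_comm]
  simp_rw [← Finset.mul_sum, hdeg, ← Finset.sum_mul, mul_comm]

theorem inNatSemigroup_bGens_snoc_iff (hdeg : ∀ j, ∑ k, v j k = 2) (a : Fin s → ℕ) (z : ℤ) :
    InNatSemigroup (bGens v) (Fin.snoc (fun i => (a i : ℤ)) z) ↔
      ExpMemPow v a (∑ i, (a i : ℤ) - z).toNat := by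
  have hsum (m : Fin q → ℕ) : ∑ i, ∑ j, (m j : ℤ) * v j i = 2 * ∑ j, (m j : ℤ) := by
    exact_mod_cast sum_sum_mul_eq_two_mul hdeg m
  constructor
  · rintro ⟨c, hc⟩
    have hi : ∀ i, (a i : ℤ) = c (.inr (.inl i)) + ∑ j, (c (.inr (.inr j)) : ℤ) * v j i :=
      fun i => by simpa only [Fin.snoc_castSucc, sum_mul_bGens_castSucc] using hc i.castSucc
    have hz : z = c (.inl ()) + ∑ i, (c (.inr (.inl i)) : ℤ) + ∑ j, (c (.inr (.inr j)) : ℤ) := by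
      simpa only [Fin.snoc_last, sum_mul_bGens_last] using hc (Fin.last s)
    refine ⟨fun j => c (.inr (.inr j)), ?_, fun i => ?_⟩
    · rw [Int.toNat_le, Finset.sum_congr rfl fun i _ => hi i, Finset.sum_add_distrib, hz,
        hsum fun j => c (.inr (.inr j))]
      push_cast
      linarith [(c (.inl ())).cast_nonneg (α := ℤ)]
    · zify
      linarith [hi i, (c (.inr (.inl i))).cast_nonneg (α := ℤ)]
  · rintro ⟨m, hN, hle⟩
    rw [Int.toNat_le, Nat.cast_sum] at hN
    refine ⟨Sum.elim (fun _ => (z - ∑ i, (a i : ℤ) + ∑ j, (m j : ℤ)).toNat)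
      (Sum.elim (fun i => a i - ∑ j, m j * v j i) m), fun k => ?_⟩
    induction k using Fin.lastCases with
    | last =>
      rw [Fin.snoc_last, sum_mul_bGens_last]
      simp only [Sum.elim_inl, Sum.elim_inr]
      rw [Int.toNat_of_nonneg (by linarith)]
      push_cast [Nat.cast_sub (hle _)]
      rw [Finset.sum_sub_distrib, hsum]
      ring
    | cast i =>
      rw [Fin.snoc_castSucc, sum_mul_bGens_castSucc]
      simp [Nat.cast_sub (hle i)]

theorem inNatSemigroup_bGens_nsmul_snoc_iff (hdeg : ∀ j, ∑ k, v j k = 2) (p : ℕ)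
    (a : Fin s → ℕ) (z : ℤ) :
    InNatSemigroup (bGens v) (p • Fin.snoc (fun i => (a i : ℤ)) z) ↔
      ExpMemPow v (p • a) (p * (∑ i, (a i : ℤ) - z).toNat) := by
  have hsnoc : p • Fin.snoc (fun i => (a i : ℤ)) z =
      Fin.snoc (α := fun _ => ℤ) (fun i => ((p • a) i : ℤ)) (p * z) := by
    funext k
    induction k using Fin.lastCases <;> simp
  rw [hsnoc, inNatSemigroup_bGens_snoc_iff hdeg, ← Int.toNat_natCast_mul, mul_sub, Finset.mul_sum]
  simp

end BGens

theorem normal_iff_B_hilbert_basis_of_degree_two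
    (K : Type*) [Field K] {s q : ℕ} (v : Fin q → Fin s → ℕ)
    (hdeg : ∀ i, (∑ k, v i k) = 2) :
    IsNormalIdeal (monIdeal K v) ↔
      ∀ x : Fin (s + 1) → ℤ,
        (∃ c : (Unit ⊕ Fin s ⊕ Fin q) → ℝ, (∀ j, 0 ≤ c j) ∧
            ∀ k, (x k : ℝ) = ∑ j, c j * (bGens v j k : ℝ)) ↔
        (∃ c : (Unit ⊕ Fin s ⊕ Fin q) → ℕ, ∀ k, x k = ∑ j, (c j : ℤ) * bGens v j k) := by
  change _ ↔ ∀ x, InRealCone (bGens v) x ↔ InNatSemigroup (bGens v) x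
  rw [isNormalIdeal_monIdeal_iff]
  refine ⟨fun hA x => ⟨fun hx => ?_, InNatSemigroup.inRealCone⟩, fun hB a n p hp h => ?_⟩
  · obtain ⟨a, z, rfl⟩ := Fin.exists_eq_snoc_natCast x fun i => hx.nonneg (bGens_nonneg v) _
    obtain ⟨p, hp, hpx⟩ := hx.exists_nsmul_inNatSemigroup
    rw [inNatSemigroup_bGens_nsmul_snoc_iff hdeg] at hpx
    exact (inNatSemigroup_bGens_snoc_iff hdeg _ _).2 (hA _ _ p hp hpx)
  · have hn : (∑ i, (a i : ℤ) - (∑ i, (a i : ℤ) - n)).toNat = n := by simp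
    have hpx :=
      (inNatSemigroup_bGens_nsmul_snoc_iff hdeg p a (∑ i, (a i : ℤ) - n)).2 (by rwa [hn])
    simpa [inNatSemigroup_bGens_snoc_iff hdeg, hn] using (hB _).1 (hpx.inRealCone.of_nsmul hp)
end
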